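/- Let Y be a nonempty closed subset of a compact metrizable space X, and let M be a fuzzy metric on Y (with the Łukasiewicz t-norm) inducing the subspace topology. Then there exists a fuzzy metric M' on X (with the Łukasiewicz t-norm) inducing the topology of X such that M' restricted to Y × Y × (0,∞) equals M. -/

import Mathlib

open Set MeasureTheory Filter Topology

noncomputable section

/-- The Łukasiewicz t-norm. -/
def luk (a b : ℝ) : ℝ := max (a + b - 1) 0

/-- A continuous t-norm on `[0,1]`. -/
structure IsContinuousTNorm (star : ℝ → ℝ → ℝ) : Prop where
  maps_to : ∀ a b, a ∈ Icc (0:ℝ) 1 → b ∈ Icc (0:ℝ) 1 → star a b ∈ Icc (0:ℝ) 1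
  comm : ∀ a b, a ∈ Icc (0:ℝ) 1 → b ∈ Icc (0:ℝ) 1 → star a b = star b a
  assoc : ∀ a b c, a ∈ Icc (0:ℝ) 1 → b ∈ Icc (0:ℝ) 1 → c ∈ Icc (0:ℝ) 1 →
    star (star a b) c = star a (star b c)
  continuous : ContinuousOn (fun p : ℝ × ℝ => star p.1 p.2) (Icc 0 1 ×ˢ Icc 0 1)
  one_right : ∀ a, a ∈ Icc (0:ℝ) 1 → star a 1 = a
  mono : ∀ a b c d, a ∈ Icc (0:ℝ) 1 → b ∈ Icc (0:ℝ) 1 → c ∈ Icc (0:ℝ) 1 →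
    d ∈ Icc (0:ℝ) 1 → a ≤ c → b ≤ d → star a b ≤ star c d

/-- A fuzzy metric (George–Veeramani) with respect to a t-norm `star`. -/
structure IsFuzzyMetric {X : Type*} (M : X → X → ℝ → ℝ) (star : ℝ → ℝ → ℝ) : Prop where
  pos : ∀ x y t, 0 < t → 0 < M x y t
  le_one : ∀ x y t, 0 < t → M x y t ≤ 1
  eq_one_iff : ∀ x y t, 0 < t → (M x y t = 1 ↔ x = y)
  symm : ∀ x y t, 0 < t → M x y t = M y x t
  triangle : ∀ x y z t s, 0 < t → 0 < s → star (M x y t) (M y z s) ≤ M x z (t + s)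
  continuousOn : ∀ x y, ContinuousOn (fun t => M x y t) (Ioi (0:ℝ))

/-- The open ball `B(x,r,t)` in a fuzzy metric space. -/
def fmBall {X : Type*} (M : X → X → ℝ → ℝ) (x : X) (r t : ℝ) : Set X :=
  {y | 1 - r < M x y t}

/-- The `r,t`-expansion `A^{r,t}` of a set `A`. -/
def fmExpand {X : Type*} (M : X → X → ℝ → ℝ) (A : Set X) (r t : ℝ) : Set X :=
  ⋃ x ∈ A, fmBall M x r t

/-- The fuzzy metric `M` generates the given topology on `X`. -/
def GeneratesTopology {X : Type*} [TopologicalSpace X] (M : X → X → ℝ → ℝ) : Prop :=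
  TopologicalSpace.IsTopologicalBasis
    {s : Set X | ∃ x r t, 0 < r ∧ r < 1 ∧ 0 < t ∧ s = fmBall M x r t}

/-- The set of admissible radii in the definition of the fuzzy Prokhorov metric. -/
def prokSet {X : Type*} [MeasurableSpace X] (M : X → X → ℝ → ℝ)
    (μ ν : Measure X) (t : ℝ) : Set ℝ :=
  {r | 0 < r ∧ r < 1 ∧ ∀ A : Set X, MeasurableSet A →
    μ A ≤ ν (fmExpand M A r t) + ENNReal.ofReal r ∧
    ν A ≤ μ (fmExpand M A r t) + ENNReal.ofReal r}

/-- The fuzzy Prokhorov function `M̂` on measures. -/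
def fuzzyProkhorov {X : Type*} [MeasurableSpace X] (M : X → X → ℝ → ℝ)
    (μ ν : Measure X) (t : ℝ) : ℝ :=
  1 - sInf (prokSet M μ ν t)


/-!
Write `D = 1 - M` for the defect of `M`. For the Łukasiewicz t-norm the triangle axiom reads
`D x z (t + s) ≤ D x y t + D y z s`, so `D` can be extended the way a metric is extended from a
closed subset (Hausdorff). Fix a metric on `X`. By compactness of `Y`, `D a b t` is bounded by
`g (dist a b) t`, where `g s t` is the infimum of the affine bounds `ε + s / φ` valid at time `t`;
`g` is subadditive in `(s, t)`, continuous in `s` and vanishes at `s = 0`. The ambient defect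
`G x y t = max (min (dist x y) (1 / 2)) (g (dist x y) t)` is then a defect on `X` dominating `D`
on `Y`, and the extension is the least of `G x y t` and the costs
`G x a t₁ + D a b t₂ + G b y t₃` of detours through `Y` with `t₁ + t₂ + t₃ = t`. Concatenating
detours gives the triangle inequality and the equality with `D` on `Y`; since a small detour cost
forces a small distance uniformly (compactness again), the balls of the extension generate the
topology of `X`.
-/

theorem le_csInf_add_csInf {s t : Set ℝ} (hs : s.Nonempty) (ht : t.Nonempty) {c : ℝ}
    (h : ∀ a ∈ s, ∀ b ∈ t, c ≤ a + b) : c ≤ sInf s + sInf t := by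
  rw [← sub_le_iff_le_add]
  refine le_csInf hs fun a ha => sub_le_comm.1 (le_csInf ht fun b hb => ?_)
  linarith [h a ha b hb]

/-- One-sided equicontinuity in `t` on compact subintervals of `(0, ∞)`; together with
antitonicity in `t` it gives continuity. -/
def HasUniformTimeModulus {ι : Type*} (f : ι → ℝ → ℝ) : Prop :=
  ∀ c d ε : ℝ, 0 < c → 0 < ε → ∃ η > 0, ∀ i u v, c ≤ u → u ≤ v → v ≤ d → v - u ≤ η →
    f i u ≤ f i v + ε

theorem HasUniformTimeModulus.continuousOn {ι : Type*} {f : ι → ℝ → ℝ}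
    (hf : HasUniformTimeModulus f) (hanti : ∀ i, AntitoneOn (f i) (Ioi 0)) (i : ι) :
    ContinuousOn (f i) (Ioi 0) := by
  intro t ht
  rw [mem_Ioi] at ht
  refine Metric.continuousWithinAt_iff.2 fun ε hε => ?_
  obtain ⟨η, hη, hmod⟩ := hf (t / 2) (2 * t) (ε / 2) (by positivity) (by positivity)
  refine ⟨min η (t / 2), by positivity, fun {u} hu hut => ?_⟩
  rw [Real.dist_eq, abs_lt] at hut ⊢
  have h₁ := min_le_left η (t / 2)
  have h₂ := min_le_right η (t / 2)
  rcases le_total u t with h | h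
  · have := hmod i u t (by linarith) h (by linarith) (by linarith)
    have := hanti i hu ht h
    constructor <;> linarith
  · have := hmod i t u (by linarith) h (by linarith) (by linarith)
    have := hanti i ht hu h
    constructor <;> linarith

theorem ContinuousAt.exists_pos_abs_sub_lt {f : ℝ → ℝ} {t : ℝ} (hf : ContinuousAt f t)
    (ht : 0 < t) (k : ℝ) {ε : ℝ} (hε : 0 < ε) :
    ∃ s, 0 < s ∧ 0 < t + k * s ∧ |f (t + k * s) - f t| < ε := by
  have hk : Tendsto (fun s => t + k * s) (𝓝[>] 0) (𝓝 t) :=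
    (Continuous.tendsto' (by fun_prop) 0 t (by simp)).mono_left nhdsWithin_le_nhds
  exact (eventually_mem_nhdsWithin.and ((hk.eventually (eventually_gt_nhds ht)).and
    ((hf.tendsto.comp hk).eventually (Metric.ball_mem_nhds _ hε)))).exists

namespace IsFuzzyMetric

variable {X : Type*} {M : X → X → ℝ → ℝ}

theorem self_eq_one (hM : IsFuzzyMetric M luk) (x : X) {t : ℝ} (ht : 0 < t) : M x x t = 1 :=
  (hM.eq_one_iff x x t ht).2 rfl

theorem lt_one (hM : IsFuzzyMetric M luk) {x y : X} (hxy : x ≠ y) {t : ℝ} (ht : 0 < t) :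
    M x y t < 1 :=
  (hM.le_one x y t ht).lt_of_ne fun h => hxy ((hM.eq_one_iff x y t ht).1 h)

theorem luk_le (hM : IsFuzzyMetric M luk) (x y z : X) {t s : ℝ} (ht : 0 < t) (hs : 0 < s) :
    M x y t + M y z s - 1 ≤ M x z (t + s) :=
  (le_max_left _ _).trans (hM.triangle x y z t s ht hs)

theorem luk_le₃ (hM : IsFuzzyMetric M luk) (a b c d : X) {t₁ t₂ t₃ : ℝ} (h₁ : 0 < t₁)
    (h₂ : 0 < t₂) (h₃ : 0 < t₃) :
    M a b t₁ + M b c t₂ + M c d t₃ - 2 ≤ M a d (t₁ + t₂ + t₃) := by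
  linarith [hM.luk_le a b c h₁ h₂, hM.luk_le a c d (add_pos h₁ h₂) h₃]

theorem mono (hM : IsFuzzyMetric M luk) (x y : X) {t t' : ℝ} (ht : 0 < t) (htt' : t ≤ t') :
    M x y t ≤ M x y t' := by
  rcases htt'.eq_or_lt with rfl | h
  · rfl
  · have := hM.luk_le x y y ht (sub_pos.2 h)
    rw [hM.self_eq_one y (sub_pos.2 h), add_sub_cancel] at this
    linarith

theorem mem_fmBall_comm (hM : IsFuzzyMetric M luk) {x y : X} {r t : ℝ} (ht : 0 < t)
    (h : y ∈ fmBall M x r t) : x ∈ fmBall M y r t := by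
  change 1 - r < M y x t
  rwa [hM.symm y x t ht]

theorem sub_lt_of_mem_fmBall (hM : IsFuzzyMetric M luk) {a b a' b' : X} {r s τ : ℝ}
    (hs : 0 < s) (hτ : 0 < τ) (ha : a' ∈ fmBall M a r s) (hb : b' ∈ fmBall M b r s) :
    M a b τ - 2 * r < M a' b' (τ + 2 * s) := by
  have := hM.luk_le₃ a' a b b' hs hτ hs
  rw [hM.symm a' a s hs, show s + τ + s = τ + 2 * s by ring] at this
  change 1 - r < M a a' s at ha
  change 1 - r < M b b' s at hb
  linarith

theorem mem_fmBall_self (hM : IsFuzzyMetric M luk) (x : X) {r t : ℝ} (hr : 0 < r)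
    (ht : 0 < t) : x ∈ fmBall M x r t := by
  change 1 - r < M x x t
  rw [hM.self_eq_one x ht]
  linarith

variable [TopologicalSpace X]

theorem continuousOn_uncurry (hM : IsFuzzyMetric M luk) (hgen : GeneratesTopology M) :
    ContinuousOn (fun p : (X × X) × ℝ => M p.1.1 p.1.2 p.2) (univ ×ˢ Ioi 0) := by
  rintro ⟨⟨a, b⟩, t⟩ ⟨-, ht : 0 < t⟩
  have hcont : ContinuousAt (M a b) t := (hM.continuousOn a b).continuousAt (Ioi_mem_nhds ht)
  have hball {r s : ℝ} (hr₀ : 0 < r) (hr₁ : r < 1) (hs : 0 < s) (I : Set ℝ) (hI : IsOpen I)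
      (htI : t ∈ I) :
      (fmBall M a r s ×ˢ fmBall M b r s) ×ˢ I ∈ 𝓝[univ ×ˢ Ioi 0] ((a, b), t) :=
    mem_nhdsWithin_of_mem_nhds <| (((hgen.isOpen ⟨a, r, s, hr₀, hr₁, hs, rfl⟩).prod
      (hgen.isOpen ⟨b, r, s, hr₀, hr₁, hs, rfl⟩)).prod hI).mem_nhds
      ⟨⟨hM.mem_fmBall_self a hr₀ hs, hM.mem_fmBall_self b hr₀ hs⟩, htI⟩
  -- by the three-step triangle inequality, `M a' b' t'` lies between `M a b (t ∓ 3 s) ∓ 2 r`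
  refine tendsto_order.2 ⟨fun m (hm : m < M a b t) => ?_, fun m (hm : M a b t < m) => ?_⟩
  · set r := min ((M a b t - m) / 4) (1 / 2)
    have hr : 0 < r := lt_min (by linarith) one_half_pos
    have hr₁ : r ≤ 1 / 2 := min_le_right _ _
    have hrm : r ≤ (M a b t - m) / 4 := min_le_left _ _
    obtain ⟨s, hs, hts, hMs⟩ := hcont.exists_pos_abs_sub_lt ht (-3) hr
    filter_upwards [hball hr (by linarith) hs
      (Ioi (t - s)) isOpen_Ioi (sub_lt_self t hs), self_mem_nhdsWithin]
    rintro ⟨⟨a', b'⟩, t'⟩ ⟨⟨ha', hb'⟩, ht' : t - s < t'⟩ ⟨-, ht'₀ : 0 < t'⟩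
    show m < M a' b' t'
    have hlow := hM.sub_lt_of_mem_fmBall hs hts ha' hb'
    have := hM.mono a' b' (by linarith) (by linarith : t + -3 * s + 2 * s ≤ t')
    linarith [(abs_lt.1 hMs).1]
  · set r := min ((m - M a b t) / 4) (1 / 2)
    have hr : 0 < r := lt_min (by linarith) one_half_pos
    have hr₁ : r ≤ 1 / 2 := min_le_right _ _
    have hrm : r ≤ (m - M a b t) / 4 := min_le_left _ _
    obtain ⟨s, hs, hts, hMs⟩ := hcont.exists_pos_abs_sub_lt ht 3 hr
    filter_upwards [hball hr (by linarith) hs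
      (Iio (t + s)) isOpen_Iio (lt_add_of_pos_right t hs), self_mem_nhdsWithin]
    rintro ⟨⟨a', b'⟩, t'⟩ ⟨⟨ha', hb'⟩, ht' : t' < t + s⟩ ⟨-, ht'₀ : 0 < t'⟩
    show M a' b' t' < m
    have hup := hM.sub_lt_of_mem_fmBall (τ := t + s) hs (by linarith)
      (hM.mem_fmBall_comm hs ha') (hM.mem_fmBall_comm hs hb')
    rw [show t + s + 2 * s = t + 3 * s by ring] at hup
    have := hM.mono a' b' ht'₀ ht'.le
    linarith [(abs_lt.1 hMs).2]

theorem continuous_uncurry_left (hM : IsFuzzyMetric M luk) (hgen : GeneratesTopology M) {t : ℝ}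
    (ht : 0 < t) : Continuous fun p : X × X => M p.1 p.2 t :=
  (hM.continuousOn_uncurry hgen).comp_continuous (continuous_id.prodMk continuous_const)
    fun _ => ⟨trivial, ht⟩

end IsFuzzyMetric

theorem exists_pos_forall_le_of_le {Z : Type*} [TopologicalSpace Z] [CompactSpace Z] {f h : Z → ℝ}
    (hf : Continuous f) (hh : Continuous h) (hpos : ∀ z, 0 < f z → 0 < h z) {δ : ℝ}
    (hδ : 0 < δ) : ∃ c > 0, ∀ z, δ ≤ f z → c ≤ h z :=
  (isClosed_le continuous_const hf).isCompact.exists_forall_le' hh.continuousOn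
    fun z hz => hpos z (hδ.trans_le hz)

namespace IsFuzzyMetric

variable {Y : Type*} [MetricSpace Y] [CompactSpace Y] {M : Y → Y → ℝ → ℝ}

theorem exists_le_one_sub_of_le_dist (hM : IsFuzzyMetric M luk) (hgen : GeneratesTopology M)
    {t δ : ℝ} (ht : 0 < t) (hδ : 0 < δ) :
    ∃ c > 0, ∀ a b, δ ≤ dist a b → c ≤ 1 - M a b t := by
  obtain ⟨c, hc, h⟩ := exists_pos_forall_le_of_le (f := fun p : Y × Y => dist p.1 p.2)
    (h := fun p => 1 - M p.1 p.2 t) (continuous_fst.dist continuous_snd)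
    (continuous_const.sub (hM.continuous_uncurry_left hgen ht))
    (fun p hp => sub_pos.2 (hM.lt_one (dist_pos.1 hp) ht)) hδ
  exact ⟨c, hc, fun a b => h (a, b)⟩

theorem exists_one_sub_le_of_dist_le (hM : IsFuzzyMetric M luk) (hgen : GeneratesTopology M)
    {t ε : ℝ} (ht : 0 < t) (hε : 0 < ε) :
    ∃ φ > 0, ∀ a b, dist a b ≤ φ → 1 - M a b t ≤ ε := by
  obtain ⟨c, hc, h⟩ := exists_pos_forall_le_of_le (f := fun p : Y × Y => 1 - M p.1 p.2 t)
    (h := fun p => dist p.1 p.2) (continuous_const.sub (hM.continuous_uncurry_left hgen ht))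
    (continuous_fst.dist continuous_snd)
    (fun p hp => dist_pos.2 fun hab => by simp [hab, hM.self_eq_one _ ht] at hp) hε
  refine ⟨c / 2, half_pos hc, fun a b hab => ?_⟩
  by_contra! hlt
  linarith [h (a, b) hlt.le]

theorem hasUniformTimeModulus (hM : IsFuzzyMetric M luk) (hgen : GeneratesTopology M) :
    HasUniformTimeModulus fun (p : Y × Y) t => 1 - M p.1 p.2 t := by
  intro c d ε hc hε
  have hK : IsCompact ((univ : Set (Y × Y)) ×ˢ Icc c d) := isCompact_univ.prod isCompact_Icc
  obtain ⟨η, hη, h⟩ := Metric.uniformContinuousOn_iff_le.1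
    (hK.uniformContinuousOn_of_continuous ((hM.continuousOn_uncurry hgen).mono
      (prod_mono subset_rfl fun t ht => hc.trans_le ht.1))) ε hε
  refine ⟨η, hη, fun p u v hu huv hv hvu => ?_⟩
  have := h (p, u) ⟨trivial, hu, huv.trans hv⟩ (p, v) ⟨trivial, hu.trans huv, hv⟩
    (by rw [Prod.dist_eq, dist_self, Real.dist_eq, abs_of_nonpos (sub_nonpos.2 huv)]
        exact max_le hη.le (by linarith))
  rw [Real.dist_eq] at this
  linarith [(abs_le.1 this).1]

end IsFuzzyMetric

section DefectModulus

variable {Y : Type*} [MetricSpace Y] {M : Y → Y → ℝ → ℝ}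

/-- A concave majorant of the defect `1 - M a b t` as a function of `dist a b`: taking the
infimum of affine bounds `ε + s / φ` makes it subadditive in `(s, t)`. -/
def defectModulus (M : Y → Y → ℝ → ℝ) (s t : ℝ) : ℝ :=
  sInf {v | ∃ ε φ : ℝ, 0 < ε ∧ 0 < φ ∧ (∀ a b, dist a b ≤ φ → 1 - M a b t ≤ ε) ∧
    v = ε + s / φ}

theorem defectModulus_le {s t ε φ : ℝ} (hs : 0 ≤ s) (hε : 0 < ε) (hφ : 0 < φ)
    (h : ∀ a b, dist a b ≤ φ → 1 - M a b t ≤ ε) : defectModulus M s t ≤ ε + s / φ :=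
  csInf_le ⟨0, by rintro _ ⟨ε, φ, hε, hφ, -, rfl⟩; positivity⟩ ⟨ε, φ, hε, hφ, h, rfl⟩

theorem le_defectModulus (hM : IsFuzzyMetric M luk) {s t c : ℝ} (ht : 0 < t)
    (h : ∀ ε φ, 0 < ε → 0 < φ → (∀ a b, dist a b ≤ φ → 1 - M a b t ≤ ε) → c ≤ ε + s / φ) :
    c ≤ defectModulus M s t :=
  le_csInf ⟨_, 1, 1, one_pos, one_pos, fun a b _ => by linarith [hM.pos a b t ht], rfl⟩
    (by rintro _ ⟨ε, φ, hε, hφ, hv, rfl⟩; exact h ε φ hε hφ hv)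

theorem defectModulus_nonneg {s t : ℝ} (hs : 0 ≤ s) : 0 ≤ defectModulus M s t :=
  Real.sInf_nonneg (by rintro _ ⟨ε, φ, hε, hφ, -, rfl⟩; positivity)

theorem one_sub_le_defectModulus (hM : IsFuzzyMetric M luk) {t : ℝ} (ht : 0 < t) (a b : Y) :
    1 - M a b t ≤ defectModulus M (dist a b) t := by
  refine le_defectModulus hM ht fun ε φ hε hφ h => ?_
  rcases le_total (dist a b) φ with hab | hab
  · linarith [h a b hab, div_nonneg (dist_nonneg (x := a) (y := b)) hφ.le]
  · linarith [(one_le_div hφ).2 hab, hM.pos a b t ht]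

theorem defectModulus_le_add (hM : IsFuzzyMetric M luk) {s s' u v δ : ℝ} (hs : 0 ≤ s)
    (hss' : s ≤ s') (hv : 0 < v) (hδ : 0 ≤ δ) (h : ∀ a b, M a b v ≤ M a b u + δ) :
    defectModulus M s u ≤ defectModulus M s' v + δ := by
  rw [← sub_le_iff_le_add]
  refine le_defectModulus hM hv fun ε φ hε hφ hεφ => ?_
  have := defectModulus_le (t := u) hs (add_pos_of_pos_of_nonneg hε hδ) hφ
    fun a b hab => by linarith [hεφ a b hab, h a b]
  have : s / φ ≤ s' / φ := by gcongr
  linarith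

theorem defectModulus_le_of_le (hM : IsFuzzyMetric M luk) {s s' t t' : ℝ} (hs : 0 ≤ s)
    (hss' : s ≤ s') (ht : 0 < t) (htt' : t ≤ t') :
    defectModulus M s t' ≤ defectModulus M s' t := by
  simpa using defectModulus_le_add (u := t') hM hs hss' ht le_rfl fun a b => by
    simpa using hM.mono a b ht htt'

theorem defectModulus_add_le (hM : IsFuzzyMetric M luk) {s₁ s₂ t t₁ t₂ : ℝ} (hs₁ : 0 ≤ s₁)
    (hs₂ : 0 ≤ s₂) (ht₁ : 0 < t₁) (ht₂ : 0 < t₂) (h₁ : t₁ ≤ t) (h₂ : t₂ ≤ t) :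
    defectModulus M (s₁ + s₂) t ≤ defectModulus M s₁ t₁ + defectModulus M s₂ t₂ := by
  rw [← sub_le_iff_le_add]
  refine le_defectModulus hM ht₁ fun ε₁ φ₁ hε₁ hφ₁ hv₁ => ?_
  rw [sub_le_comm]
  refine le_defectModulus hM ht₂ fun ε₂ φ₂ hε₂ hφ₂ hv₂ => ?_
  have hv : ∀ a b, dist a b ≤ max φ₁ φ₂ → 1 - M a b t ≤ ε₁ + ε₂ := fun a b hab => by
    rcases le_max_iff.1 hab with hab | hab
    · linarith [hv₁ a b hab, hM.mono a b ht₁ h₁]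
    · linarith [hv₂ a b hab, hM.mono a b ht₂ h₂]
  have := defectModulus_le (add_nonneg hs₁ hs₂) (add_pos hε₁ hε₂)
    (hφ₁.trans_le (le_max_left _ _)) hv
  have : s₁ / max φ₁ φ₂ ≤ s₁ / φ₁ := div_le_div_of_nonneg_left hs₁ hφ₁ (le_max_left _ _)
  have : s₂ / max φ₁ φ₂ ≤ s₂ / φ₂ := div_le_div_of_nonneg_left hs₂ hφ₂ (le_max_right _ _)
  rw [add_div] at *
  linarith

variable [CompactSpace Y]

theorem exists_defectModulus_le (hM : IsFuzzyMetric M luk) (hgen : GeneratesTopology M)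
    {t ε : ℝ} (ht : 0 < t) (hε : 0 < ε) :
    ∃ κ > 0, ∀ σ, 0 ≤ σ → σ ≤ κ → defectModulus M σ t ≤ ε := by
  obtain ⟨φ, hφ, h⟩ := hM.exists_one_sub_le_of_dist_le hgen ht (half_pos hε)
  refine ⟨φ * (ε / 2), by positivity, fun σ hσ hσκ => ?_⟩
  have := defectModulus_le hσ (half_pos hε) hφ h
  have : σ / φ ≤ ε / 2 := by rwa [div_le_iff₀' hφ]
  linarith

theorem defectModulus_zero (hM : IsFuzzyMetric M luk) (hgen : GeneratesTopology M) {t : ℝ}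
    (ht : 0 < t) : defectModulus M 0 t = 0 := by
  refine le_antisymm (le_of_forall_pos_le_add fun ε hε => ?_) (defectModulus_nonneg le_rfl)
  obtain ⟨κ, hκ, h⟩ := exists_defectModulus_le hM hgen ht hε
  simpa using h 0 le_rfl hκ.le

theorem defectModulus_lt_one (hM : IsFuzzyMetric M luk) (hgen : GeneratesTopology M)
    {s t : ℝ} (hs : 0 ≤ s) (ht : 0 < t) : defectModulus M s t < 1 := by
  obtain ⟨c, hc, hcM⟩ := isCompact_univ.exists_forall_le'
    (hM.continuous_uncurry_left hgen ht).continuousOn fun p _ => hM.pos p.1 p.2 t ht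
  set c' := min c 1
  have hc' : 0 < c' := lt_min hc one_pos
  have := defectModulus_le (M := M) (t := t) hs (ε := 1 - c' / 2) (φ := 4 * (s + 1) / c')
    (by linarith [min_le_right c 1]) (by positivity) fun a b _ => by
      linarith [hcM (a, b) trivial, min_le_left c 1]
  have : s / (4 * (s + 1) / c') ≤ c' / 4 := by
    rw [div_div_eq_mul_div, div_le_div_iff₀ (by positivity) four_pos]
    nlinarith
  linarith

theorem continuousOn_defectModulus (hM : IsFuzzyMetric M luk) (hgen : GeneratesTopology M)
    {t : ℝ} (ht : 0 < t) : ContinuousOn (fun s => defectModulus M s t) (Ici 0) := by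
  intro s (hs : 0 ≤ s)
  refine Metric.continuousWithinAt_iff.2 fun ε hε => ?_
  obtain ⟨κ, hκ, hsmall⟩ := exists_defectModulus_le hM hgen ht (half_pos hε)
  -- subadditivity and monotonicity in `s` give `|g u' - g u| ≤ g (u' - u)`
  have key : ∀ u u', 0 ≤ u → u ≤ u' → u' - u < κ →
      defectModulus M u t ≤ defectModulus M u' t ∧
        defectModulus M u' t ≤ defectModulus M u t + ε / 2 := fun u u' hu huu' hκu => by
    have := defectModulus_add_le hM hu (sub_nonneg.2 huu') ht ht le_rfl le_rfl
    rw [add_sub_cancel] at this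
    exact ⟨defectModulus_le_of_le hM hu huu' ht le_rfl,
      by linarith [hsmall (u' - u) (sub_nonneg.2 huu') hκu.le]⟩
  refine ⟨κ, hκ, fun {s'} (hs' : 0 ≤ s') hss' => ?_⟩
  rw [Real.dist_eq, abs_lt] at hss' ⊢
  rcases le_total s s' with h | h
  · have := key s s' hs h (by linarith)
    constructor <;> linarith
  · have := key s' s hs' h (by linarith)
    constructor <;> linarith

end DefectModulus

section Extension

variable {E : Type*} [MetricSpace E] {Z : Set E} {M : Z → Z → ℝ → ℝ}

/-- The stationary term `min (dist x y) (1 / 2)` separates points; the modulus term dominates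
the defect of `M` on `Z`. -/
def ambientDefect (M : Z → Z → ℝ → ℝ) (x y : E) (t : ℝ) : ℝ :=
  max (min (dist x y) (1 / 2)) (defectModulus M (dist x y) t)

theorem ambientDefect_nonneg (x y : E) (t : ℝ) : 0 ≤ ambientDefect M x y t :=
  (le_min dist_nonneg one_half_pos.le).trans (le_max_left _ _)

theorem ambientDefect_comm (x y : E) (t : ℝ) : ambientDefect M x y t = ambientDefect M y x t := by
  simp only [ambientDefect, dist_comm]

theorem one_sub_le_ambientDefect (hM : IsFuzzyMetric M luk) {t : ℝ} (ht : 0 < t) (a b : Z) :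
    1 - M a b t ≤ ambientDefect M a b t :=
  (one_sub_le_defectModulus hM ht a b).trans (le_max_right _ _)

theorem ambientDefect_triangle (hM : IsFuzzyMetric M luk) (x y z : E) {t s : ℝ} (ht : 0 < t)
    (hs : 0 < s) : ambientDefect M x z (t + s) ≤ ambientDefect M x y t + ambientDefect M y z s := by
  have hxyz := dist_triangle x y z
  refine max_le ?_ ?_
  · have : min (dist x z) (1 / 2) ≤ min (dist x y) (1 / 2) + min (dist y z) (1 / 2) := by
      simp only [min_def]
      split_ifs <;> linarith [dist_nonneg (x := x) (y := y), dist_nonneg (x := y) (y := z)]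
    exact this.trans (add_le_add (le_max_left _ _) (le_max_left _ _))
  · calc defectModulus M (dist x z) (t + s)
        ≤ defectModulus M (dist x y + dist y z) (t + s) :=
          defectModulus_le_of_le hM dist_nonneg hxyz (add_pos ht hs) le_rfl
      _ ≤ defectModulus M (dist x y) t + defectModulus M (dist y z) s :=
          defectModulus_add_le hM dist_nonneg dist_nonneg ht hs (by linarith) (by linarith)
      _ ≤ _ := add_le_add (le_max_right _ _) (le_max_right _ _)

theorem ambientDefect_anti (hM : IsFuzzyMetric M luk) (x y : E) {t t' : ℝ} (ht : 0 < t)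
    (htt' : t ≤ t') : ambientDefect M x y t' ≤ ambientDefect M x y t :=
  max_le_max le_rfl (defectModulus_le_of_le hM dist_nonneg le_rfl ht htt')

theorem dist_lt_of_ambientDefect_lt {x y : E} {t r : ℝ} (hr : r ≤ 1 / 2)
    (h : ambientDefect M x y t < r) : dist x y < r :=
  (min_lt_iff.1 ((le_max_left _ _).trans_lt h)).resolve_right fun h' => by linarith

/-- Hausdorff's extension formula: the ambient defect, or the cost of a detour `x → a ⇝ b → y`
through `Z` whose middle leg is measured by `M`. -/
def extDefectSet (M : Z → Z → ℝ → ℝ) (x y : E) (t : ℝ) : Set ℝ :=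
  insert (ambientDefect M x y t) {v | ∃ (a b : Z) (t₁ t₂ t₃ : ℝ), 0 < t₁ ∧ 0 < t₂ ∧ 0 < t₃ ∧
    t₁ + t₂ + t₃ = t ∧ v = ambientDefect M x a t₁ + (1 - M a b t₂) + ambientDefect M b y t₃}

def extDefect (M : Z → Z → ℝ → ℝ) (x y : E) (t : ℝ) : ℝ :=
  sInf (extDefectSet M x y t)

theorem nonneg_of_mem_extDefectSet (hM : IsFuzzyMetric M luk) {x y : E} {t v : ℝ}
    (hv : v ∈ extDefectSet M x y t) : 0 ≤ v := by
  rcases hv with rfl | ⟨a, b, t₁, t₂, t₃, -, h₂, -, -, rfl⟩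
  · exact ambientDefect_nonneg x y t
  · linarith [ambientDefect_nonneg (M := M) x a t₁, ambientDefect_nonneg (M := M) b y t₃,
      hM.le_one a b t₂ h₂]

theorem extDefect_nonneg (hM : IsFuzzyMetric M luk) (x y : E) (t : ℝ) : 0 ≤ extDefect M x y t :=
  Real.sInf_nonneg fun _ => nonneg_of_mem_extDefectSet hM

theorem extDefect_le (hM : IsFuzzyMetric M luk) {x y : E} {t v : ℝ}
    (hv : v ∈ extDefectSet M x y t) : extDefect M x y t ≤ v :=
  csInf_le ⟨0, fun _ => nonneg_of_mem_extDefectSet hM⟩ hv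

theorem extDefect_le_ambientDefect (hM : IsFuzzyMetric M luk) (x y : E) (t : ℝ) :
    extDefect M x y t ≤ ambientDefect M x y t :=
  extDefect_le hM (mem_insert _ _)

theorem extDefect_le_detour (hM : IsFuzzyMetric M luk) {x y : E} {t : ℝ} (a b : Z)
    {t₁ t₂ t₃ : ℝ} (h₁ : 0 < t₁) (h₂ : 0 < t₂) (h₃ : 0 < t₃) (ht : t₁ + t₂ + t₃ = t) :
    extDefect M x y t ≤ ambientDefect M x a t₁ + (1 - M a b t₂) + ambientDefect M b y t₃ :=
  extDefect_le hM (mem_insert_of_mem _ ⟨a, b, t₁, t₂, t₃, h₁, h₂, h₃, ht, rfl⟩)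

theorem le_extDefect {x y : E} {t c : ℝ} (h : ∀ v ∈ extDefectSet M x y t, c ≤ v) :
    c ≤ extDefect M x y t :=
  le_csInf (insert_nonempty _ _) h

theorem exists_detour_lt_of_extDefect_lt {x y : E} {t r : ℝ} (h : extDefect M x y t < r) :
    ambientDefect M x y t < r ∨ ∃ (a b : Z) (t₁ t₂ t₃ : ℝ), 0 < t₁ ∧ 0 < t₂ ∧ 0 < t₃ ∧
      t₁ + t₂ + t₃ = t ∧ ambientDefect M x a t₁ + (1 - M a b t₂) + ambientDefect M b y t₃ < r := by
  obtain ⟨v, hv, hvr⟩ := exists_lt_of_csInf_lt (insert_nonempty _ _) h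
  rcases hv with rfl | ⟨a, b, t₁, t₂, t₃, h₁, h₂, h₃, ht, rfl⟩
  · exact Or.inl hvr
  · exact Or.inr ⟨a, b, t₁, t₂, t₃, h₁, h₂, h₃, ht, hvr⟩

theorem extDefect_comm_le (hM : IsFuzzyMetric M luk) (x y : E) (t : ℝ) :
    extDefect M y x t ≤ extDefect M x y t := by
  refine le_extDefect ?_
  rintro _ (rfl | ⟨a, b, t₁, t₂, t₃, h₁, h₂, h₃, ht, rfl⟩)
  · exact (extDefect_le_ambientDefect hM y x t).trans_eq (ambientDefect_comm y x t)
  · refine (extDefect_le_detour hM b a h₃ h₂ h₁ (by linarith)).trans_eq ?_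
    rw [hM.symm b a t₂ h₂, ambientDefect_comm y (b : E), ambientDefect_comm (a : E) x]
    ring

theorem extDefect_comm (hM : IsFuzzyMetric M luk) (x y : E) (t : ℝ) :
    extDefect M x y t = extDefect M y x t :=
  le_antisymm (extDefect_comm_le hM y x t) (extDefect_comm_le hM x y t)

theorem extDefect_triangle (hM : IsFuzzyMetric M luk) (x y z : E) {t s : ℝ} (ht : 0 < t)
    (hs : 0 < s) : extDefect M x z (t + s) ≤ extDefect M x y t + extDefect M y z s := by
  refine le_csInf_add_csInf (insert_nonempty _ _) (insert_nonempty _ _) ?_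
  rintro _ (rfl | ⟨a, b, t₁, t₂, t₃, h₁, h₂, h₃, hsum, rfl⟩)
    _ (rfl | ⟨c, e, s₁, s₂, s₃, k₁, k₂, k₃, ksum, rfl⟩)
  · exact (extDefect_le_ambientDefect hM x z _).trans (ambientDefect_triangle hM x y z ht hs)
  · refine (extDefect_le_detour hM c e (add_pos ht k₁) k₂ k₃ (by linarith)).trans ?_
    linarith [ambientDefect_triangle hM x y c ht k₁]
  · refine (extDefect_le_detour hM a b h₁ h₂ (add_pos h₃ hs) (by linarith)).trans ?_
    linarith [ambientDefect_triangle hM b y z h₃ hs]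
  · refine (extDefect_le_detour hM a e h₁ (add_pos (add_pos h₂ (add_pos h₃ k₁)) k₂) k₃
      (by linarith)).trans ?_
    linarith [hM.luk_le₃ a b c e h₂ (add_pos h₃ k₁) k₂, ambientDefect_triangle hM b y c h₃ k₁,
      one_sub_le_ambientDefect hM (add_pos h₃ k₁) b c]

theorem extDefect_anti (hM : IsFuzzyMetric M luk) (x y : E) {t t' : ℝ} (ht : 0 < t)
    (htt' : t ≤ t') : extDefect M x y t' ≤ extDefect M x y t := by
  refine le_extDefect ?_
  rintro _ (rfl | ⟨a, b, t₁, t₂, t₃, h₁, h₂, h₃, hsum, rfl⟩)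
  · exact (extDefect_le_ambientDefect hM x y t').trans (ambientDefect_anti hM x y ht htt')
  · refine (extDefect_le_detour hM a b h₁ h₂ (by linarith : 0 < t₃ + (t' - t))
      (by linarith)).trans ?_
    linarith [ambientDefect_anti hM b y h₃ (by linarith : t₃ ≤ t₃ + (t' - t))]

variable [CompactSpace Z]

theorem ambientDefect_self (hM : IsFuzzyMetric M luk) (hgen : GeneratesTopology M) (x : E)
    {t : ℝ} (ht : 0 < t) : ambientDefect M x x t = 0 := by
  simp [ambientDefect, defectModulus_zero hM hgen ht]

theorem ambientDefect_lt_one (hM : IsFuzzyMetric M luk) (hgen : GeneratesTopology M)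
    (x y : E) {t : ℝ} (ht : 0 < t) : ambientDefect M x y t < 1 :=
  max_lt ((min_le_right _ _).trans_lt (by norm_num))
    (defectModulus_lt_one hM hgen dist_nonneg ht)

theorem continuous_ambientDefect (hM : IsFuzzyMetric M luk) (hgen : GeneratesTopology M)
    (x : E) {t : ℝ} (ht : 0 < t) : Continuous fun y => ambientDefect M x y t :=
  ((continuous_const.dist continuous_id).min continuous_const).max
    ((continuousOn_defectModulus hM hgen ht).comp_continuous
      (continuous_const.dist continuous_id) fun _ => dist_nonneg)

theorem hasUniformTimeModulus_ambientDefect (hM : IsFuzzyMetric M luk)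
    (hgen : GeneratesTopology M) :
    HasUniformTimeModulus fun (p : E × E) t => ambientDefect M p.1 p.2 t := by
  intro c d ε hc hε
  obtain ⟨η, hη, h⟩ := hM.hasUniformTimeModulus hgen c d ε hc hε
  refine ⟨η, hη, fun p u v hu huv hv hvu => ?_⟩
  have := defectModulus_le_add (u := u) hM (dist_nonneg (x := p.1) (y := p.2)) le_rfl
    (hc.trans_le (hu.trans huv)) hε.le fun a b => by linarith [h (a, b) u v hu huv hv hvu]
  dsimp only [ambientDefect]
  set m := min (dist p.1 p.2) (1 / 2)
  exact max_le (by linarith [le_max_left m (defectModulus M (dist p.1 p.2) v)])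
    (by linarith [le_max_right m (defectModulus M (dist p.1 p.2) v)])

theorem extDefect_self (hM : IsFuzzyMetric M luk) (hgen : GeneratesTopology M) (x : E) {t : ℝ}
    (ht : 0 < t) : extDefect M x x t = 0 :=
  le_antisymm ((extDefect_le_ambientDefect hM x x t).trans_eq (ambientDefect_self hM hgen x ht))
    (extDefect_nonneg hM x x t)

theorem extDefect_lt_one (hM : IsFuzzyMetric M luk) (hgen : GeneratesTopology M) (x y : E)
    {t : ℝ} (ht : 0 < t) : extDefect M x y t < 1 :=
  (extDefect_le_ambientDefect hM x y t).trans_lt (ambientDefect_lt_one hM hgen x y ht)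

theorem extDefect_coe (hM : IsFuzzyMetric M luk) (hgen : GeneratesTopology M) (a b : Z) {t : ℝ}
    (ht : 0 < t) : extDefect M a b t = 1 - M a b t := by
  refine le_antisymm ?_ (le_extDefect ?_)
  · have hle : ∀ τ ∈ Ioo 0 t, extDefect M a b t ≤ 1 - M a b τ := fun τ ⟨hτ, hτt⟩ => by
      refine (extDefect_le_detour hM a b (by linarith : 0 < (t - τ) / 2) hτ
        (by linarith : 0 < (t - τ) / 2) (by ring)).trans_eq ?_
      rw [ambientDefect_self hM hgen _ (by linarith), ambientDefect_self hM hgen _ (by linarith),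
        zero_add, add_zero]
    have hlim : Tendsto (fun τ => 1 - M a b τ) (𝓝[<] t) (𝓝 (1 - M a b t)) :=
      (((hM.continuousOn a b).continuousAt (Ioi_mem_nhds ht)).tendsto.const_sub 1).mono_left
        nhdsWithin_le_nhds
    exact ge_of_tendsto hlim (eventually_of_mem (Ioo_mem_nhdsLT ht) hle)
  · rintro _ (rfl | ⟨a', b', t₁, t₂, t₃, h₁, h₂, h₃, hsum, rfl⟩)
    · exact one_sub_le_ambientDefect hM ht a b
    · have := hM.luk_le₃ a a' b' b h₁ h₂ h₃
      rw [hsum] at this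
      linarith [one_sub_le_ambientDefect hM h₁ a a', one_sub_le_ambientDefect hM h₃ b' b]

theorem isOpen_setOf_extDefect_lt (hM : IsFuzzyMetric M luk) (hgen : GeneratesTopology M)
    (x : E) {t : ℝ} (ht : 0 < t) (r : ℝ) : IsOpen {y | extDefect M x y t < r} := by
  refine isOpen_iff_forall_mem_open.2 fun y hy => ?_
  rcases exists_detour_lt_of_extDefect_lt hy with hG | ⟨a, b, t₁, t₂, t₃, h₁, h₂, h₃, hsum, hlt⟩
  · exact ⟨{y' | ambientDefect M x y' t < r},
      fun y' hy' => (extDefect_le_ambientDefect hM x y' t).trans_lt hy',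
      isOpen_lt (continuous_ambientDefect hM hgen x ht) continuous_const, hG⟩
  · exact ⟨{y' | ambientDefect M x a t₁ + (1 - M a b t₂) + ambientDefect M b y' t₃ < r},
      fun y' hy' => (extDefect_le_detour hM a b h₁ h₂ h₃ hsum).trans_lt hy',
      isOpen_lt (continuous_const.add (continuous_ambientDefect hM hgen b h₃)) continuous_const,
      hlt⟩

theorem exists_dist_lt_of_extDefect_lt (hM : IsFuzzyMetric M luk) (hgen : GeneratesTopology M)
    {t η : ℝ} (ht : 0 < t) (hη : 0 < η) :
    ∃ r, 0 < r ∧ r < 1 ∧ ∀ x y : E, extDefect M x y t < r → dist x y < η := by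
  obtain ⟨c, hc, hcM⟩ := hM.exists_le_one_sub_of_le_dist hgen ht (by positivity : 0 < η / 3)
  set r := min (min c (η / 3)) (1 / 2)
  have hr : 0 < r := by positivity
  have hr₁ : r ≤ 1 / 2 := min_le_right _ _
  have hrc : r ≤ c := (min_le_left _ _).trans (min_le_left _ _)
  have hrη : r ≤ η / 3 := (min_le_left _ _).trans (min_le_right _ _)
  have hclose {u v : E} {τ : ℝ} (h : ambientDefect M u v τ < r) : dist u v < η / 3 :=
    (dist_lt_of_ambientDefect_lt hr₁ h).trans_le hrη
  refine ⟨r, hr, by linarith, fun x y hxy => ?_⟩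
  rcases exists_detour_lt_of_extDefect_lt hxy with hG | ⟨a, b, t₁, t₂, t₃, h₁, h₂, h₃, hsum, hlt⟩
  · linarith [hclose hG]
  have hxa := ambientDefect_nonneg (M := M) x a t₁
  have hby := ambientDefect_nonneg (M := M) b y t₃
  have hab := hM.le_one a b t₂ h₂
  -- the middle leg is short because `1 - M a b t ≤ 1 - M a b t₂ < r ≤ c`
  have hab' : dist (a : E) b < η / 3 := by
    by_contra! h
    linarith [hcM a b h, hM.mono a b h₂ (by linarith : t₂ ≤ t)]
  linarith [dist_triangle4 x a b y, hclose (by linarith : ambientDefect M x a t₁ < r),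
    hclose (by linarith : ambientDefect M b y t₃ < r)]

theorem eq_of_extDefect_eq_zero (hM : IsFuzzyMetric M luk) (hgen : GeneratesTopology M)
    {x y : E} {t : ℝ} (ht : 0 < t) (h : extDefect M x y t = 0) : x = y := by
  by_contra hxy
  obtain ⟨r, hr, -, hdist⟩ := exists_dist_lt_of_extDefect_lt hM hgen ht (dist_pos.2 hxy)
  exact lt_irrefl _ (hdist x y (h ▸ hr))

theorem hasUniformTimeModulus_extDefect (hM : IsFuzzyMetric M luk) (hgen : GeneratesTopology M) :
    HasUniformTimeModulus fun (p : E × E) t => extDefect M p.1 p.2 t := by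
  intro c d ε hc hε
  obtain ⟨η₁, hη₁, hG⟩ := hasUniformTimeModulus_ambientDefect (E := E) hM hgen (c / 6) d (ε / 2)
    (by positivity) (by positivity)
  obtain ⟨η₂, hη₂, hD⟩ := hM.hasUniformTimeModulus hgen (c / 6) d (ε / 2) (by positivity)
    (by positivity)
  refine ⟨min (min η₁ η₂) (c / 6), by positivity, fun ⟨x, y⟩ u v hu huv hv hvu => ?_⟩
  dsimp only
  have hδ₁ : v - u ≤ η₁ := hvu.trans ((min_le_left _ _).trans (min_le_left _ _))
  have hδ₂ : v - u ≤ η₂ := hvu.trans ((min_le_left _ _).trans (min_le_right _ _))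
  have hδc : v - u ≤ c / 6 := hvu.trans (min_le_right _ _)
  rcases exists_detour_lt_of_extDefect_lt (lt_add_of_pos_right (extDefect M x y v)
    (half_pos hε)) with hG' | ⟨a, b, t₁, t₂, t₃, h₁, h₂, h₃, hsum, hlt⟩
  · linarith [extDefect_le_ambientDefect hM x y u,
      hG (x, y) u v (by linarith) huv hv (by linarith)]
  -- shrink a leg of length at least `v / 3` by `v - u`
  have hxa := ambientDefect_nonneg (M := M) x a t₁
  have hby := ambientDefect_nonneg (M := M) b y t₃
  have hab := hM.le_one a b t₂ h₂
  obtain h | h | h : v / 3 ≤ t₁ ∨ v / 3 ≤ t₂ ∨ v / 3 ≤ t₃ := by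
    by_contra! h
    linarith [h.1, h.2.1, h.2.2]
  · refine (extDefect_le_detour hM a b (by linarith : 0 < t₁ - (v - u)) h₂ h₃
      (by linarith)).trans ?_
    linarith [hG (x, a) (t₁ - (v - u)) t₁ (by linarith) (by linarith) (by linarith) (by linarith)]
  · refine (extDefect_le_detour hM a b h₁ (by linarith : 0 < t₂ - (v - u)) h₃
      (by linarith)).trans ?_
    linarith [hD (a, b) (t₂ - (v - u)) t₂ (by linarith) (by linarith) (by linarith) (by linarith)]
  · refine (extDefect_le_detour hM a b h₁ h₂ (by linarith : 0 < t₃ - (v - u))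
      (by linarith)).trans ?_
    linarith [hG (b, y) (t₃ - (v - u)) t₃ (by linarith) (by linarith) (by linarith) (by linarith)]

theorem continuousOn_extDefect (hM : IsFuzzyMetric M luk) (hgen : GeneratesTopology M)
    (x y : E) : ContinuousOn (extDefect M x y) (Ioi 0) :=
  (hasUniformTimeModulus_extDefect hM hgen).continuousOn
    (fun p _ ht _ _ htt' => extDefect_anti hM p.1 p.2 ht htt') (x, y)

theorem isFuzzyMetric_one_sub_extDefect (hM : IsFuzzyMetric M luk)
    (hgen : GeneratesTopology M) : IsFuzzyMetric (fun x y t => 1 - extDefect M x y t) luk where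
  pos x y t ht := sub_pos.2 (extDefect_lt_one hM hgen x y ht)
  le_one x y t _ := sub_le_self _ (extDefect_nonneg hM x y t)
  eq_one_iff x y t ht := by
    rw [sub_eq_self]
    exact ⟨eq_of_extDefect_eq_zero hM hgen ht, fun h => h ▸ extDefect_self hM hgen x ht⟩
  symm x y t _ := by rw [extDefect_comm hM]
  triangle x y z t s ht hs := max_le
    (by linarith [extDefect_triangle hM x y z ht hs])
    (sub_nonneg.2 (extDefect_lt_one hM hgen x z (add_pos ht hs)).le)
  continuousOn x y := continuousOn_const.sub (continuousOn_extDefect hM hgen x y)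

theorem generatesTopology_one_sub_extDefect (hM : IsFuzzyMetric M luk)
    (hgen : GeneratesTopology M) : GeneratesTopology fun (x y : E) t => 1 - extDefect M x y t := by
  have hball (x : E) (r t : ℝ) :
      fmBall (fun x y t => 1 - extDefect M x y t) x r t = {y | extDefect M x y t < r} := by
    ext y
    exact sub_lt_sub_iff_left (1 : ℝ)
  refine TopologicalSpace.isTopologicalBasis_of_isOpen_of_nhds ?_ fun x U hxU hU => ?_
  · rintro _ ⟨x, r, t, -, -, ht, rfl⟩
    rw [hball]
    exact isOpen_setOf_extDefect_lt hM hgen x ht r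
  · obtain ⟨η, hη, hηU⟩ := Metric.isOpen_iff.1 hU x hxU
    obtain ⟨r, hr, hr₁, hdist⟩ := exists_dist_lt_of_extDefect_lt (E := E) hM hgen one_pos hη
    refine ⟨_, ⟨x, r, 1, hr, hr₁, one_pos, rfl⟩, ?_, ?_⟩
    · rw [hball]
      change extDefect M x x 1 < r
      rwa [extDefect_self hM hgen x one_pos]
    · rw [hball]
      exact fun y hy => hηU (by rw [Metric.mem_ball, dist_comm]; exact hdist x y hy)

end Extension

theorem fuzzyMetric_extension_general {X : Type*} [TopologicalSpace X] [CompactSpace X]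
    [TopologicalSpace.MetrizableSpace X]
    (Y : Set X) (hYc : IsClosed Y)
    (M : Y → Y → ℝ → ℝ) (hM : IsFuzzyMetric M luk) (hgen : GeneratesTopology M) :
    ∃ M' : X → X → ℝ → ℝ, IsFuzzyMetric M' luk ∧ GeneratesTopology M' ∧
      ∀ (y z : Y) (t : ℝ), 0 < t → M' (y : X) (z : X) t = M y z t := by
  let _ : MetricSpace X := TopologicalSpace.metrizableSpaceMetric X
  have _ : CompactSpace Y := isCompact_iff_compactSpace.mp hYc.isCompact
  exact ⟨_, isFuzzyMetric_one_sub_extDefect hM hgen, generatesTopology_one_sub_extDefect hM hgen,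
    fun y z t ht => by rw [extDefect_coe hM hgen y z ht, sub_sub_cancel]⟩

/-- every fuzzy metric (with the Łukasiewicz t-norm) on a nonempty closed
subset of a compact metrizable space extends to a fuzzy metric on the whole space. -/
theorem fuzzyMetric_extension {X : Type*} [TopologicalSpace X] [CompactSpace X]
    [TopologicalSpace.MetrizableSpace X]
    (Y : Set X) (hYc : IsClosed Y) (hYne : Y.Nonempty)
    (M : Y → Y → ℝ → ℝ) (hM : IsFuzzyMetric M luk) (hgen : GeneratesTopology M) :
    ∃ M' : X → X → ℝ → ℝ, IsFuzzyMetric M' luk ∧ GeneratesTopology M' ∧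
      ∀ (y z : Y) (t : ℝ), 0 < t → M' (y : X) (z : X) t = M y z t :=
  fuzzyMetric_extension_general Y hYc M hM hgen
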